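/- If a strictly feasible pair exists, then at every minimizer (p*, y*) of the multi-slot network delay, whenever y*_{q,i} > 0 on an energy link q with start node a and end node b at slot i, one has g_l(p*_{l,i}) = α_q · g_m(p*_{m,i}) for every data link l outgoing from a and every data link m outgoing from b, where g_l(p) = (t_l/(2σ_l)) · ((1/2)·ln(1 + p/σ_l) − t_l)^{−2} · (1 + p/σ_l)^{−1}. -/

import Mathlib

open BigOperators ENNReal

/-- A multi-slot energy harvesting network with energy cooperation: nodes `N`, data
links `L` (start node, fixed flow `t l > 0`, noise power `σ l > 0`), energy links `Q`
(start node, end node, efficiency `α q ∈ (0,1]`), `T` time slots and harvested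
energies `E n i ≥ 0` at node `n` in slot `i`. -/
structure NetT where
  N : Type
  L : Type
  Q : Type
  [fintypeN : Fintype N]
  [fintypeL : Fintype L]
  [fintypeQ : Fintype Q]
  [decEqN : DecidableEq N]
  T : ℕ
  startD : L → N
  startE : Q → N
  endE : Q → N
  α : Q → ℝ
  t : L → ℝ
  σ : L → ℝ
  E : N → Fin T → ℝ
  hα : ∀ q, 0 < α q ∧ α q ≤ 1
  ht : ∀ l, 0 < t l
  hσ : ∀ l, 0 < σ l
  hE : ∀ n i, 0 ≤ E n i

attribute [instance] NetT.fintypeN NetT.fintypeL NetT.fintypeQ NetT.decEqN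

/-- Feasibility of `(p, y)`: nonnegative energy transfers, link powers at least
`σ_l (e^{2 t_l} − 1)` in every slot, and the cumulative (energy-causality)
constraint at every node `n` and every slot `k`. -/
def NetT.Feasible (net : NetT) (p : net.L → Fin net.T → ℝ)
    (y : net.Q → Fin net.T → ℝ) : Prop :=
  (∀ q i, 0 ≤ y q i) ∧
  (∀ l i, net.σ l * (Real.exp (2 * net.t l) - 1) ≤ p l i) ∧
  (∀ (n : net.N) (k : Fin net.T),
    (∑ i ∈ Finset.Iic k,
      ((∑ l ∈ Finset.univ.filter (fun l => net.startD l = n), p l i) +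
        (∑ q ∈ Finset.univ.filter (fun q => net.startE q = n), y q i))) ≤
    ∑ i ∈ Finset.Iic k,
      (net.E n i + ∑ q ∈ Finset.univ.filter (fun q => net.endE q = n), net.α q * y q i))

/-- Strict feasibility: feasible with `p_{l,i} > σ_l (e^{2 t_l} − 1)` for all `l, i`. -/
def NetT.StrictFeasible (net : NetT) (p : net.L → Fin net.T → ℝ)
    (y : net.Q → Fin net.T → ℝ) : Prop :=
  net.Feasible p y ∧ ∀ l i, net.σ l * (Real.exp (2 * net.t l) - 1) < p l i

/-- The multi-slot network delay, `+∞` if some denominator is nonpositive. -/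
noncomputable def NetT.Delay (net : NetT) (p : net.L → Fin net.T → ℝ) : ℝ≥0∞ :=
  if ∀ l i, net.t l < (1 / 2) * Real.log (1 + p l i / net.σ l) then
    ENNReal.ofReal
      (∑ i, ∑ l, net.t l / ((1 / 2) * Real.log (1 + p l i / net.σ l) - net.t l))
  else ⊤

/-- A minimizer of the multi-slot network delay over feasible pairs. -/
def NetT.IsMinimizer (net : NetT) (p : net.L → Fin net.T → ℝ)
    (y : net.Q → Fin net.T → ℝ) : Prop :=
  net.Feasible p y ∧ ∀ p' y', net.Feasible p' y' → net.Delay p ≤ net.Delay p'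

/-- The marginal quantity
`g(p) = (t/(2σ)) · ((1/2)·ln(1 + p/σ) − t)^{−2} · (1 + p/σ)^{−1}`. -/
noncomputable def gMarg (t σ p : ℝ) : ℝ :=
  t / (2 * σ) / ((1 / 2) * Real.log (1 + p / σ) - t) ^ 2 / (1 + p / σ)

/-! At a minimizer every link power lies strictly above its floor `σ (e^{2t} - 1)`, since a
strictly feasible pair has finite delay. Sending `ε` less energy over `q` in slot `i`, while
spending `ε` more on `l` and `α ε` less on `m`, leaves every node's per-slot energy balance
unchanged, so it is feasible for all small `ε` of either sign. The delay is differentiable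
along this path with derivative `α g_m - g_l` at `ε = 0`, which must vanish. -/

open Filter Topology

lemma neg_lt_mul_exp_sub_one {σ : ℝ} (hσ : 0 < σ) (t : ℝ) : -σ < σ * (Real.exp t - 1) := by
  nlinarith [Real.exp_pos t]

lemma one_add_div_pos {σ p : ℝ} (hσ : 0 < σ) (hp : -σ < p) : 0 < 1 + p / σ := by
  have h : 0 < (σ + p) / σ := div_pos (by linarith) hσ
  rwa [add_div, div_self hσ.ne'] at h

lemma lt_half_log_one_add_div_iff {t σ p : ℝ} (hσ : 0 < σ) (hp : -σ < p) :
    t < 1 / 2 * Real.log (1 + p / σ) ↔ σ * (Real.exp (2 * t) - 1) < p := by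
  have hpos := one_add_div_pos hσ hp
  calc t < 1 / 2 * Real.log (1 + p / σ) ↔ 2 * t < Real.log (1 + p / σ) := by
        constructor <;> intro h <;> linarith
    _ ↔ Real.exp (2 * t) < 1 + p / σ := Real.lt_log_iff_exp_lt hpos
    _ ↔ σ * (Real.exp (2 * t) - 1) < p := by
        rw [← sub_lt_iff_lt_add', lt_div_iff₀ hσ, mul_comm]

noncomputable def delayTerm (t σ p : ℝ) : ℝ := t / (1 / 2 * Real.log (1 + p / σ) - t)

lemma hasDerivAt_delayTerm {t σ p : ℝ} (hp : 1 + p / σ ≠ 0)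
    (hden : 1 / 2 * Real.log (1 + p / σ) - t ≠ 0) :
    HasDerivAt (delayTerm t σ) (-gMarg t σ p) p := by
  have hlog : HasDerivAt (fun x => 1 / 2 * Real.log (1 + x / σ) - t)
      (1 / 2 * (1 / σ / (1 + p / σ))) p := by
    have h := ((((hasDerivAt_id p).div_const σ).const_add 1).log hp).const_mul (1 / 2 : ℝ)
    simpa using h.sub_const t
  refine ((hasDerivAt_const p t).div hlog hden).congr_deriv ?_
  unfold gMarg
  ring

namespace NetT

variable {net : NetT}

lemma delay_lt_top_iff {p : net.L → Fin net.T → ℝ} :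
    net.Delay p < ⊤ ↔ ∀ l i, net.t l < 1 / 2 * Real.log (1 + p l i / net.σ l) := by
  unfold Delay
  split_ifs with h
  · simp only [ENNReal.ofReal_lt_top, h, implies_true]
  · simp only [lt_self_iff_false, h]

noncomputable def delaySum (net : NetT) (p : net.L → Fin net.T → ℝ) : ℝ :=
  ∑ i, ∑ l, delayTerm (net.t l) (net.σ l) (p l i)

lemma delay_eq_ofReal_delaySum {p : net.L → Fin net.T → ℝ}
    (hp : ∀ l i, net.t l < 1 / 2 * Real.log (1 + p l i / net.σ l)) :
    net.Delay p = ENNReal.ofReal (net.delaySum p) := by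
  rw [Delay, if_pos hp]
  rfl

lemma delaySum_nonneg {p : net.L → Fin net.T → ℝ}
    (hp : ∀ l i, net.t l < 1 / 2 * Real.log (1 + p l i / net.σ l)) :
    0 ≤ net.delaySum p :=
  Finset.sum_nonneg fun i _ => Finset.sum_nonneg fun l _ =>
    div_nonneg (net.ht l).le (sub_pos.2 (hp l i)).le

lemma lt_half_log_iff_floor_lt {l : net.L} {x : ℝ}
    (hx : net.σ l * (Real.exp (2 * net.t l) - 1) ≤ x) :
    net.t l < 1 / 2 * Real.log (1 + x / net.σ l) ↔
      net.σ l * (Real.exp (2 * net.t l) - 1) < x :=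
  lt_half_log_one_add_div_iff (net.hσ l) ((neg_lt_mul_exp_sub_one (net.hσ l) _).trans_le hx)

lemma IsMinimizer.floor_lt {p p₀ : net.L → Fin net.T → ℝ} {y y₀ : net.Q → Fin net.T → ℝ}
    (hmin : net.IsMinimizer p y) (h₀ : net.StrictFeasible p₀ y₀) (l : net.L) (i : Fin net.T) :
    net.σ l * (Real.exp (2 * net.t l) - 1) < p l i := by
  have hfin₀ : net.Delay p₀ < ⊤ :=
    delay_lt_top_iff.2 fun l i => (lt_half_log_iff_floor_lt (h₀.1.2.1 l i)).2 (h₀.2 l i)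
  have hfin : net.Delay p < ⊤ := (hmin.2 p₀ y₀ h₀.1).trans_lt hfin₀
  exact (lt_half_log_iff_floor_lt (hmin.1.2.1 l i)).1 (delay_lt_top_iff.1 hfin l i)

lemma eventually_floor_lt_add_smul {p : net.L → Fin net.T → ℝ}
    (hp : ∀ l i, net.σ l * (Real.exp (2 * net.t l) - 1) < p l i) (dp : net.L → Fin net.T → ℝ) :
    ∀ᶠ ε in 𝓝 (0 : ℝ), ∀ l i, net.σ l * (Real.exp (2 * net.t l) - 1) < (p + ε • dp) l i := by
  refine eventually_all.2 fun l => eventually_all.2 fun i => ?_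
  have hcont : Continuous fun ε : ℝ => p l i + ε * dp l i := by fun_prop
  have h : ∀ᶠ ε in 𝓝 (0 : ℝ),
      net.σ l * (Real.exp (2 * net.t l) - 1) < p l i + ε * dp l i :=
    continuousAt_const.eventually_lt hcont.continuousAt (by simpa using hp l i)
  simpa using h

theorem IsMinimizer.sum_gMarg_mul_eq_zero {p dp : net.L → Fin net.T → ℝ}
    {y dy : net.Q → Fin net.T → ℝ} (hmin : net.IsMinimizer p y)
    (hp : ∀ l i, net.σ l * (Real.exp (2 * net.t l) - 1) < p l i)
    (hfeas : ∀ᶠ ε in 𝓝 (0 : ℝ), net.Feasible (p + ε • dp) (y + ε • dy)) :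
    ∑ i, ∑ l, gMarg (net.t l) (net.σ l) (p l i) * dp l i = 0 := by
  have hcond : ∀ p' : net.L → Fin net.T → ℝ,
      (∀ l i, net.σ l * (Real.exp (2 * net.t l) - 1) < p' l i) →
        ∀ l i, net.t l < 1 / 2 * Real.log (1 + p' l i / net.σ l) :=
    fun p' h l i => (lt_half_log_iff_floor_lt (h l i).le).2 (h l i)
  have hderiv : HasDerivAt (fun ε : ℝ => net.delaySum (p + ε • dp))
      (∑ i, ∑ l, -gMarg (net.t l) (net.σ l) (p l i) * dp l i) 0 := by
    refine HasDerivAt.fun_sum fun i _ => HasDerivAt.fun_sum fun l _ => ?_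
    have hpos : 0 < 1 + p l i / net.σ l :=
      one_add_div_pos (net.hσ l) ((neg_lt_mul_exp_sub_one (net.hσ l) _).trans (hp l i))
    have hterm := hasDerivAt_delayTerm hpos.ne' (sub_pos.2 (hcond p hp l i)).ne'
    have hline : HasDerivAt (fun ε : ℝ => p l i + ε * dp l i) (dp l i) 0 := by
      simpa using ((hasDerivAt_id (0 : ℝ)).mul_const (dp l i)).const_add (p l i)
    exact hterm.comp_of_eq 0 hline (by simp)
  have hlocal : IsLocalMin (fun ε : ℝ => net.delaySum (p + ε • dp)) 0 := by
    filter_upwards [hfeas, eventually_floor_lt_add_smul hp dp] with ε hε hfloor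
    have hle := hmin.2 _ _ hε
    rw [delay_eq_ofReal_delaySum (hcond p hp),
      delay_eq_ofReal_delaySum (hcond _ hfloor)] at hle
    simpa using (ENNReal.ofReal_le_ofReal_iff (delaySum_nonneg (hcond _ hfloor))).1 hle
  simpa [Finset.sum_neg_distrib] using hlocal.hasDerivAt_eq_zero hderiv

def netOutflow (net : NetT) (p : net.L → Fin net.T → ℝ) (y : net.Q → Fin net.T → ℝ)
    (n : net.N) (i : Fin net.T) : ℝ :=
  ∑ l ∈ Finset.univ.filter (fun l => net.startD l = n), p l i +
    ∑ q ∈ Finset.univ.filter (fun q => net.startE q = n), y q i -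
    ∑ q ∈ Finset.univ.filter (fun q => net.endE q = n), net.α q * y q i

lemma netOutflow_add_smul (p dp : net.L → Fin net.T → ℝ) (y dy : net.Q → Fin net.T → ℝ)
    (ε : ℝ) (n : net.N) (i : Fin net.T) :
    net.netOutflow (p + ε • dp) (y + ε • dy) n i =
      net.netOutflow p y n i + ε * net.netOutflow dp dy n i := by
  simp only [netOutflow, Pi.add_apply, Pi.smul_apply, smul_eq_mul, mul_add, mul_left_comm _ ε,
    Finset.sum_add_distrib, ← Finset.mul_sum]
  ring

lemma Feasible.of_netOutflow_eq {p p' : net.L → Fin net.T → ℝ} {y y' : net.Q → Fin net.T → ℝ}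
    (h : net.Feasible p y) (hy' : ∀ q i, 0 ≤ y' q i)
    (hp' : ∀ l i, net.σ l * (Real.exp (2 * net.t l) - 1) ≤ p' l i)
    (hflow : ∀ n i, net.netOutflow p' y' n i = net.netOutflow p y n i) :
    net.Feasible p' y' := by
  refine ⟨hy', hp', fun n k => ?_⟩
  have hslot : ∀ i,
      (∑ l ∈ Finset.univ.filter (fun l => net.startD l = n), p' l i +
          ∑ q ∈ Finset.univ.filter (fun q => net.startE q = n), y' q i) -
        (net.E n i + ∑ q ∈ Finset.univ.filter (fun q => net.endE q = n), net.α q * y' q i) =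
      (∑ l ∈ Finset.univ.filter (fun l => net.startD l = n), p l i +
          ∑ q ∈ Finset.univ.filter (fun q => net.startE q = n), y q i) -
        (net.E n i + ∑ q ∈ Finset.univ.filter (fun q => net.endE q = n), net.α q * y q i) := by
    intro i
    have := hflow n i
    unfold netOutflow at this
    linarith
  rw [← sub_nonpos, ← Finset.sum_sub_distrib, Finset.sum_congr rfl fun i _ => hslot i,
    Finset.sum_sub_distrib, sub_nonpos]
  exact h.2.2 n k

open Classical in
noncomputable def transferPower (net : NetT) (q : net.Q) (l m : net.L) (i : Fin net.T) :
    net.L → Fin net.T → ℝ :=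
  fun l' i' => if i' = i then (if l' = l then 1 else 0) - net.α q * (if l' = m then 1 else 0)
    else 0

open Classical in
noncomputable def transferEnergy (net : NetT) (q : net.Q) (i : Fin net.T) :
    net.Q → Fin net.T → ℝ :=
  fun q' i' => if q' = q ∧ i' = i then -1 else 0

lemma netOutflow_transfer {q : net.Q} {l m : net.L} (hl : net.startD l = net.startE q)
    (hm : net.startD m = net.endE q) (i : Fin net.T) (n : net.N) (i' : Fin net.T) :
    net.netOutflow (net.transferPower q l m i) (net.transferEnergy q i) n i' = 0 := by
  classical
  by_cases hi : i' = i
  · simp only [netOutflow, transferPower, transferEnergy, hi, and_true, if_true, mul_ite,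
      mul_one, mul_zero, mul_neg, Finset.sum_sub_distrib, Finset.sum_ite_eq', Finset.mem_filter,
      Finset.mem_univ, true_and, hl, hm]
    split_ifs <;> ring
  · simp [netOutflow, transferPower, transferEnergy, hi]

lemma sum_mul_transferPower (f : net.L → Fin net.T → ℝ) (q : net.Q) (l m : net.L)
    (i : Fin net.T) :
    ∑ i', ∑ l', f l' i' * net.transferPower q l m i l' i' = f l i - net.α q * f m i := by
  classical
  simp [transferPower, mul_sub, Finset.sum_sub_distrib, mul_comm]

end NetT

open NetT in
/-- If a strictly feasible pair exists, then at every minimizer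
`(p*, y*)` of the multi-slot network delay, whenever `y*_{q,i} > 0` on an energy link
`q` from node `a` to node `b` at slot `i`, one has
`g_l(p*_{l,i}) = α_q · g_m(p*_{m,i})` for every data link `l` outgoing from `a` and
every data link `m` outgoing from `b`. -/
theorem multislot_minimizer_energy_transfer_marginals (net : NetT)
    (hsf : ∃ p y, net.StrictFeasible p y)
    (pstar : net.L → Fin net.T → ℝ) (ystar : net.Q → Fin net.T → ℝ)
    (hmin : net.IsMinimizer pstar ystar) :
    ∀ (q : net.Q) (i : Fin net.T), 0 < ystar q i →
      ∀ l m : net.L, net.startD l = net.startE q → net.startD m = net.endE q →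
        gMarg (net.t l) (net.σ l) (pstar l i) =
          net.α q * gMarg (net.t m) (net.σ m) (pstar m i) := by
  intro q i hy l m hl hm
  obtain ⟨p₀, y₀, h₀⟩ := hsf
  have hfloor := hmin.floor_lt h₀
  have hfeas : ∀ᶠ ε in 𝓝 (0 : ℝ), net.Feasible (pstar + ε • net.transferPower q l m i)
      (ystar + ε • net.transferEnergy q i) := by
    filter_upwards [eventually_floor_lt_add_smul hfloor _, eventually_lt_nhds hy]
      with ε hε hεy
    refine hmin.1.of_netOutflow_eq (fun q' i' => ?_) (fun l' i' => (hε l' i').le)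
      (fun n i' => by rw [netOutflow_add_smul, netOutflow_transfer hl hm, mul_zero, add_zero])
    by_cases h : q' = q ∧ i' = i
    · obtain ⟨rfl, rfl⟩ := h
      simp only [Pi.add_apply, Pi.smul_apply, smul_eq_mul, transferEnergy, and_self, if_true]
      linarith
    · simpa [transferEnergy, h] using hmin.1.1 q' i'
  have hfoc := hmin.sum_gMarg_mul_eq_zero hfloor hfeas
  rw [sum_mul_transferPower] at hfoc
  linarith
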